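/- arXiv:1808.09719 — 4 statements merged into one kernel-verified Lean document; each statement's English description precedes it below -/
import Mathlib

section
/- Let (n_i)_{i≥1} be a sequence of integers with n_i ≥ 2 for all i, and let W = (W_1, W_2, W_3, …) be its J-word. If the averages (n_1 + ⋯ + n_k)/k tend to infinity as k → ∞, then the density of 1's among the terms of W equals 1; that is, lim_{N→∞} #{ j ≤ N : W_j = 1 } / N = 1. -/
/-!
The letters `2` of a J-word sit exactly at the block ends
`S k = n 1 + ⋯ + n k - (k - 1)`, and `S k > k`, so among the first `N` letters at most
`#{k ≤ N | S k ≤ N}` differ from `1`. Since `S k / k ≥ (n 1 + ⋯ + n k) / k - 1 → ∞`, for every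
`M` all but finitely many `k` with `S k ≤ N` satisfy `k ≤ N / M`; hence the `2`'s have density `0`.
-/

/-- Given a sequence `n` (indexed from 1) of integers with `n i ≥ 2` for all `i ≥ 1`,
`W` (indexed from 1) is its J-word: the concatenation of blocks `B_1 B_2 B_3 ⋯`, where
`B_1` consists of `n 1 - 1` copies of `1` followed by a single `2` and, for `i ≥ 2`,
`B_i` consists of `n i - 2` copies of `1` followed by a single `2`.  Equivalently,
`W j = 2` exactly when `j` is the position of the end of some block, i.e. when
`j = (n 1 + ⋯ + n k) - (k - 1)` for some `k ≥ 1`, and `W j = 1` otherwise. -/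
def IsJWord (n : ℕ → ℤ) (W : ℕ → ℕ) : Prop :=
  ∀ j : ℕ, 1 ≤ j →
    ((∃ k : ℕ, 1 ≤ k ∧ (j : ℤ) = (∑ i ∈ Finset.Icc 1 k, n i) - ((k : ℤ) - 1)) → W j = 2) ∧
    ((¬ ∃ k : ℕ, 1 ≤ k ∧ (j : ℤ) = (∑ i ∈ Finset.Icc 1 k, n i) - ((k : ℤ) - 1)) → W j = 1)

open Filter Topology Finset

theorem card_filter_le_le_add_div {f : ℕ → ℝ} {M : ℝ} (hM : 0 < M) {K : ℕ}
    (hK : ∀ k ≥ K, M ≤ f k / k) (N : ℕ) :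
    (#{k ∈ Icc 1 N | f k ≤ N} : ℝ) ≤ K + N / M := by
  have hsub : {k ∈ Icc 1 N | f k ≤ N} ⊆ Icc 1 K ∪ Icc 1 ⌊N / M⌋₊ := by
    intro k hk
    simp only [mem_filter, mem_Icc] at hk
    simp only [mem_union, mem_Icc]
    refine (le_or_gt k K).imp (fun h => ⟨hk.1.1, h⟩) fun h => ⟨hk.1.1, Nat.le_floor ?_⟩
    have hkpos : (0 : ℝ) < k := by exact_mod_cast hk.1.1
    have := hK k h.le
    rw [le_div_iff₀ hkpos] at this
    rw [le_div_iff₀ hM]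
    linarith [hk.2]
  calc (#{k ∈ Icc 1 N | f k ≤ N} : ℝ) ≤ (#(Icc 1 K) + #(Icc 1 ⌊N / M⌋₊) : ℕ) := by
        exact_mod_cast (card_le_card hsub).trans (card_union_le _ _)
    _ ≤ K + N / M := by
        simp only [Nat.card_Icc, add_tsub_cancel_right, Nat.cast_add]
        gcongr
        exact Nat.floor_le (by positivity)

theorem tendsto_card_filter_le_div_atTop_zero {f : ℕ → ℝ}
    (hf : Tendsto (fun k : ℕ => f k / k) atTop atTop) :
    Tendsto (fun N : ℕ => (#{k ∈ Icc 1 N | f k ≤ N} : ℝ) / N) atTop (𝓝 0) := by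
  have bound : ∀ M > 0, ∀ᶠ N : ℕ in atTop, (#{k ∈ Icc 1 N | f k ≤ N} : ℝ) / N ≤ 2 / M := by
    intro M hM
    obtain ⟨K, hK⟩ := eventually_atTop.1 (hf.eventually_ge_atTop M)
    obtain ⟨N₀, hN₀⟩ := exists_nat_ge (K * M)
    filter_upwards [eventually_ge_atTop (max N₀ 1)] with N hN
    have hN₀N : (N₀ : ℝ) ≤ N := by exact_mod_cast (le_max_left _ _).trans hN
    have hNpos : (0 : ℝ) < N := by exact_mod_cast (le_max_right _ _).trans hN
    have hK_le : (K : ℝ) ≤ N / M := by rw [le_div_iff₀ hM]; linarith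
    rw [div_le_iff₀ hNpos]
    calc _ ≤ (K : ℝ) + N / M := card_filter_le_le_add_div hM hK N
      _ ≤ N / M + N / M := by gcongr
      _ = 2 / M * N := by ring
  refine tendsto_order.2 ⟨fun a ha => Eventually.of_forall fun N => ha.trans_le (by positivity),
    fun ε hε => ?_⟩
  filter_upwards [bound (4 / ε) (by positivity)] with N hN
  calc _ ≤ 2 / (4 / ε) := hN
    _ < ε := by field_simp; linarith

def blockEnd (n : ℕ → ℤ) (k : ℕ) : ℤ := (∑ i ∈ Icc 1 k, n i) - ((k : ℤ) - 1)

theorem lt_blockEnd {n : ℕ → ℤ} (hn : ∀ i : ℕ, 1 ≤ i → 2 ≤ n i) (k : ℕ) :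
    (k : ℤ) < blockEnd n k := by
  have : #(Icc 1 k) • (2 : ℤ) ≤ ∑ i ∈ Icc 1 k, n i :=
    card_nsmul_le_sum _ _ _ fun i hi => hn i (mem_Icc.1 hi).1
  simp only [Nat.card_Icc, add_tsub_cancel_right, nsmul_eq_mul] at this
  unfold blockEnd
  linarith

theorem card_filter_ne_one_le {n : ℕ → ℤ} (hn : ∀ i : ℕ, 1 ≤ i → 2 ≤ n i) {W : ℕ → ℕ}
    (hW : IsJWord n W) (N : ℕ) :
    #{j ∈ Icc 1 N | W j ≠ 1} ≤ #{k ∈ Icc 1 N | (blockEnd n k : ℝ) ≤ N} := by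
  refine (card_le_card fun j hj => ?_).trans (card_image_le (f := fun k => (blockEnd n k).toNat))
  simp only [mem_filter, mem_Icc] at hj
  obtain ⟨⟨hj1, hjN⟩, hWj⟩ := hj
  obtain ⟨k, hk1, hjk⟩ : ∃ k, 1 ≤ k ∧ (j : ℤ) = blockEnd n k := by
    by_contra h
    exact hWj ((hW j hj1).2 h)
  have := lt_blockEnd hn k
  simp only [mem_image, mem_filter, mem_Icc]
  exact ⟨k, ⟨⟨hk1, by omega⟩, by rw [← hjk]; exact_mod_cast hjN⟩, by omega⟩

theorem tendsto_blockEnd_div_atTop {n : ℕ → ℤ}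
    (havg : Tendsto (fun k : ℕ => (∑ i ∈ Icc 1 k, (n i : ℝ)) / k) atTop atTop) :
    Tendsto (fun k : ℕ => (blockEnd n k : ℝ) / k) atTop atTop := by
  refine tendsto_atTop_mono' _ ?_ (tendsto_atTop_add_const_right _ (-1) havg)
  filter_upwards [eventually_ge_atTop 1] with k hk
  have hkpos : (0 : ℝ) < k := by exact_mod_cast hk
  simp only [blockEnd, Int.cast_sub, Int.cast_sum, Int.cast_natCast, Int.cast_one, sub_div]
  rw [div_self hkpos.ne']
  have : (0 : ℝ) ≤ 1 / k := by positivity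
  linarith

/-- If the partial quotient averages `(n_1 + ⋯ + n_k)/k` tend to infinity, then the
density of `1`'s among the terms of the J-word of `(n_i)` equals `1`. -/
theorem jword_density_of_ones (n : ℕ → ℤ) (hn : ∀ i : ℕ, 1 ≤ i → 2 ≤ n i)
    (W : ℕ → ℕ) (hW : IsJWord n W)
    (havg : Filter.Tendsto (fun k : ℕ => (∑ i ∈ Finset.Icc 1 k, (n i : ℝ)) / k)
      Filter.atTop Filter.atTop) :
    Filter.Tendsto
      (fun N : ℕ => (((Finset.Icc 1 N).filter (fun j => W j = 1)).card : ℝ) / N)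
      Filter.atTop (nhds 1) := by
  have hrest : Tendsto (fun N : ℕ => (#{j ∈ Icc 1 N | W j ≠ 1} : ℝ) / N) atTop (𝓝 0) :=
    squeeze_zero (fun _ => by positivity)
      (fun N => div_le_div_of_nonneg_right (by exact_mod_cast card_filter_ne_one_le hn hW N)
        N.cast_nonneg)
      (tendsto_card_filter_le_div_atTop_zero (tendsto_blockEnd_div_atTop havg))
  have hones : Tendsto (fun N : ℕ => 1 - (#{j ∈ Icc 1 N | W j ≠ 1} : ℝ) / N) atTop (𝓝 1) := by
    simpa using (tendsto_const_nhds (x := (1 : ℝ))).sub hrest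
  refine hones.congr' ?_
  filter_upwards [eventually_ge_atTop 1] with N hN
  have hNpos : (0 : ℝ) < N := by exact_mod_cast hN
  rw [eq_div_iff hNpos.ne', sub_mul, div_mul_cancel₀ _ hNpos.ne', one_mul, sub_eq_iff_eq_add,
    ← Nat.cast_add, card_filter_add_card_filter_not, Nat.card_Icc, add_tsub_cancel_right]
end

section
/- The set of irrational numbers x in the open unit interval (0,1) whose regular continued fraction partial quotients a_1(x), a_2(x), a_3(x), … satisfy lim_{k→∞} #{ 1 ≤ i ≤ k : a_i(x) = 1 } / k = 1 is a Lebesgue null set. -/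
/-- The Gauss continued fraction map `x ↦ {1/x}`. -/
noncomputable def gaussMap (x : ℝ) : ℝ := Int.fract (1 / x)

/-- For an irrational `x ∈ (0,1)`, `cfPartialQuotient x i` is the `i`-th partial
quotient `a_i(x)` (indexed from `1`) of the regular continued fraction expansion
`x = [0; a_1(x), a_2(x), …]`, i.e. `a_i(x) = ⌊1 / G^[i-1](x)⌋` where `G` is the
Gauss map. -/
noncomputable def cfPartialQuotient (x : ℝ) (i : ℕ) : ℤ :=
  ⌊1 / (gaussMap^[i - 1] x)⌋

/-!
The Gauss map `G` preserves the Gauss measure `dx / (1 + x)`, which is comparable to Lebesgue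
measure on `(0, 1]`. If the partial quotients of `x` equal `1` with density one, then for every `m`
the orbit `G^[i] x` visits with frequency one the points whose next `m + 1` partial quotients are
`1`; these lie in an interval of length `(4/9)^m` around `φ⁻¹`. By invariance every preimage of
that interval under `G^[i]` has Lebesgue measure at most `2 (4/9)^m`, and Fatou's lemma applied to
the visit frequencies bounds the measure of our set by the same quantity.
-/

open MeasureTheory Set Filter Topology Real Metric
open scoped ENNReal Finset goldenRatio

lemma tsum_ofReal_sub_succ {f : ℕ → ℝ} (hf : Antitone f) (hlim : Tendsto f atTop (𝓝 0)) :
    ∑' n, ENNReal.ofReal (f n - f (n + 1)) = ENNReal.ofReal (f 0) := by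
  have hnonneg n : 0 ≤ f n - f (n + 1) := sub_nonneg.2 (hf n.le_succ)
  have hsum : HasSum (fun n => f n - f (n + 1)) (f 0) := by
    refine (hasSum_iff_tendsto_nat_of_nonneg hnonneg _).2 ?_
    simp_rw [Finset.sum_range_sub']
    simpa using tendsto_const_nhds.sub hlim
  rw [← ENNReal.ofReal_tsum_of_nonneg hnonneg hsum.summable, hsum.tsum_eq]

def HasDensityOne (p : ℕ → Prop) [DecidablePred p] : Prop :=
  Tendsto (fun k : ℕ => (Nat.count p k : ℝ) / k) atTop (𝓝 1)

lemma count_div_le_one (p : ℕ → Prop) [DecidablePred p] (k : ℕ) : (Nat.count p k : ℝ) / k ≤ 1 :=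
  div_le_one_of_le₀ (by exact_mod_cast Nat.count_le p) k.cast_nonneg

lemma HasDensityOne.mono {p q : ℕ → Prop} [DecidablePred p] [DecidablePred q]
    (h : HasDensityOne p) (hpq : ∀ i, p i → q i) : HasDensityOne q :=
  tendsto_of_tendsto_of_tendsto_of_le_of_le h tendsto_const_nhds
    (fun k => div_le_div_of_nonneg_right (Nat.cast_le.2 (Nat.count_mono_left fun i _ => hpq i))
      k.cast_nonneg)
    (count_div_le_one q)

lemma count_add_count_not (p : ℕ → Prop) [DecidablePred p] (n : ℕ) :
    Nat.count p n + Nat.count (fun i => ¬p i) n = n := by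
  simp only [Nat.count_eq_card_filter_range, Finset.card_filter_add_card_filter_not,
    Finset.card_range]

lemma count_not_forall_add_le (p : ℕ → Prop) [DecidablePred p] (m k : ℕ) :
    Nat.count (fun i => ¬∀ t ≤ m, p (i + t)) k ≤ (m + 1) * Nat.count (fun i => ¬p i) (k + m) := by
  have hshift (t : ℕ) (ht : t ≤ m) :
      Nat.count (fun i => ¬p (i + t)) k ≤ Nat.count (fun i => ¬p i) (k + m) := by
    calc Nat.count (fun i => ¬p (i + t)) k ≤ Nat.count (fun i => ¬p i) (k + t) := by
          rw [Nat.count_add']; omega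
      _ ≤ _ := Nat.count_monotone _ (by omega)
  simp only [Nat.count_eq_card_filter_range] at hshift ⊢
  calc #{i ∈ Finset.range k | ¬∀ t ≤ m, p (i + t)}
      ≤ #((Finset.range (m + 1)).biUnion fun t => {i ∈ Finset.range k | ¬p (i + t)}) :=
        Finset.card_le_card fun i hi => by
          simp only [Finset.mem_filter, Finset.mem_biUnion, Finset.mem_range] at hi ⊢
          push Not at hi
          obtain ⟨hik, t, htm, ht⟩ := hi
          exact ⟨t, by omega, hik, ht⟩
    _ ≤ ∑ t ∈ Finset.range (m + 1), #{i ∈ Finset.range k | ¬p (i + t)} := Finset.card_biUnion_le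
    _ ≤ ∑ _t ∈ Finset.range (m + 1), #{i ∈ Finset.range (k + m) | ¬p i} :=
        Finset.sum_le_sum fun t ht => hshift t (by simpa [Nat.lt_succ_iff] using ht)
    _ = (m + 1) * #{i ∈ Finset.range (k + m) | ¬p i} := by simp

lemma le_count_forall_add (p : ℕ → Prop) [DecidablePred p] (m k : ℕ) :
    (k : ℝ) - (m + 1) * ((k + m : ℝ) - Nat.count p (k + m))
      ≤ Nat.count (fun i => ∀ t ≤ m, p (i + t)) k := by
  have hsplit₁ : (Nat.count p (k + m) : ℝ) + Nat.count (fun i => ¬p i) (k + m) = k + m := by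
    exact_mod_cast count_add_count_not p (k + m)
  have hsplit₂ : (Nat.count (fun i => ∀ t ≤ m, p (i + t)) k : ℝ)
      + Nat.count (fun i => ¬∀ t ≤ m, p (i + t)) k = k := by
    exact_mod_cast count_add_count_not _ k
  have hbad : (Nat.count (fun i => ¬∀ t ≤ m, p (i + t)) k : ℝ)
      ≤ (m + 1) * Nat.count (fun i => ¬p i) (k + m) := by
    exact_mod_cast count_not_forall_add_le p m k
  rw [show (k + m : ℝ) - Nat.count p (k + m) = Nat.count (fun i => ¬p i) (k + m) by linarith]
  linarith

/-- Each failure of `p` spoils at most `m + 1` blocks. -/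
lemma HasDensityOne.forall_add {p : ℕ → Prop} [DecidablePred p] (h : HasDensityOne p) (m : ℕ) :
    HasDensityOne fun i => ∀ t ≤ m, p (i + t) := by
  have hratio : Tendsto (fun k : ℕ => ((k : ℝ) + m) / k) atTop (𝓝 1) := by
    have := (tendsto_const_div_atTop_nhds_zero_nat (m : ℝ)).const_add 1
    rw [add_zero] at this
    refine this.congr' ?_
    filter_upwards [eventually_gt_atTop 0] with k hk
    field_simp
  have hlow : Tendsto (fun k : ℕ =>
      1 - (m + 1) * ((1 - Nat.count p (k + m) / ((k : ℝ) + m)) * (((k : ℝ) + m) / k)))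
      atTop (𝓝 1) := by
    have hdens : Tendsto (fun k : ℕ => (Nat.count p (k + m) : ℝ) / ((k : ℝ) + m)) atTop (𝓝 1) := by
      simpa [Function.comp_def] using h.comp (tendsto_add_atTop_nat m)
    simpa using (((tendsto_const_nhds (x := (1 : ℝ))).sub hdens).mul hratio).const_mul
      ((m : ℝ) + 1) |>.const_sub 1
  refine tendsto_of_tendsto_of_tendsto_of_le_of_le' hlow tendsto_const_nhds ?_
    (.of_forall (count_div_le_one _))
  filter_upwards [eventually_gt_atTop 0] with k hk
  have hk' : (k : ℝ) ≠ 0 := by positivity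
  calc 1 - (m + 1) * ((1 - Nat.count p (k + m) / ((k : ℝ) + m)) * (((k : ℝ) + m) / k))
      = ((k : ℝ) - (m + 1) * ((k + m : ℝ) - Nat.count p (k + m))) / k := by
        field_simp
    _ ≤ _ := div_le_div_of_nonneg_right (le_count_forall_add p m k) k.cast_nonneg

lemma card_filter_Icc_one_eq_count (p : ℕ → Prop) [DecidablePred p] (k : ℕ) :
    #{i ∈ Finset.Icc 1 k | p i} = Nat.count (fun j => p (j + 1)) k := by
  rw [Nat.count_eq_card_filter_range]
  refine Finset.card_nbij' (· - 1) (· + 1) ?_ ?_ ?_ ?_ <;> intro i hi <;>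
    simp only [Finset.coe_filter, Finset.mem_Icc, Finset.mem_range, mem_ofPred_eq] at hi ⊢
  · exact ⟨by omega, by rw [Nat.sub_add_cancel hi.1.1]; exact hi.2⟩
  · exact ⟨⟨by omega, by omega⟩, hi.2⟩
  · omega
  · omega

open Classical in
/-- Fatou's lemma applied to the visit frequencies `k⁻¹ ∑_{i < k} 𝟙_{A i}`, whose integrals are at
most `c`. -/
theorem measure_le_of_hasDensityOne_mem {α : Type*} [MeasurableSpace α] {μ : Measure α}
    {A : ℕ → Set α} (hA : ∀ i, MeasurableSet (A i)) {c : ℝ≥0∞} (hμA : ∀ i, μ (A i) ≤ c)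
    {S : Set α} (hS : ∀ x ∈ S, HasDensityOne fun i => x ∈ A i) : μ S ≤ c := by
  set f : ℕ → α → ℝ≥0∞ := fun k x => (k : ℝ≥0∞)⁻¹ * ∑ i ∈ Finset.range k, (A i).indicator 1 x
  have hind (i : ℕ) : Measurable ((A i).indicator (1 : α → ℝ≥0∞)) := measurable_one.indicator (hA i)
  have hf (k : ℕ) : Measurable (f k) := (Finset.measurable_sum _ fun i _ => hind i).const_mul _
  have hf_int (k : ℕ) : ∫⁻ x, f k x ∂μ ≤ c := by
    rw [lintegral_const_mul _ (Finset.measurable_sum _ fun i _ => hind i),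
      lintegral_finsetSum _ fun i _ => hind i]
    simp_rw [lintegral_indicator_one (hA _)]
    calc (k : ℝ≥0∞)⁻¹ * ∑ i ∈ Finset.range k, μ (A i) ≤ (k : ℝ≥0∞)⁻¹ * (k * c) := by
          gcongr
          simpa using Finset.sum_le_card_nsmul (Finset.range k) _ _ fun i _ => hμA i
      _ ≤ c := by rw [← mul_assoc]; exact mul_le_of_le_one_left' (ENNReal.inv_mul_le_one _)
  have hf_lim (x : α) (hx : x ∈ S) : Tendsto (fun k => f k x) atTop (𝓝 1) := by
    have := ENNReal.tendsto_ofReal (hS x hx)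
    rw [ENNReal.ofReal_one] at this
    refine this.congr' ?_
    filter_upwards [eventually_gt_atTop 0] with k hk
    simp only [f, Set.indicator_apply, Pi.one_apply, Finset.sum_boole,
      Nat.count_eq_card_filter_range]
    rw [ENNReal.ofReal_div_of_pos (by exact_mod_cast hk), ENNReal.ofReal_natCast,
      ENNReal.ofReal_natCast, ENNReal.div_eq_inv_mul]
  calc μ S ≤ μ {x | 1 ≤ liminf (fun k => f k x) atTop} :=
        measure_mono fun x hx => (hf_lim x hx).liminf_eq.ge
    _ ≤ ∫⁻ x, liminf (fun k => f k x) atTop ∂μ := by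
        simpa using mul_meas_ge_le_lintegral (Measurable.liminf hf) 1 (μ := μ)
    _ ≤ liminf (fun k => ∫⁻ x, f k x ∂μ) atTop := lintegral_liminf_le hf
    _ ≤ c := liminf_le_of_frequently_le' (.of_forall hf_int)

lemma gaussMap_eq_one_div_sub_floor (x : ℝ) : gaussMap x = 1 / x - ⌊1 / x⌋ :=
  (Int.self_sub_floor _).symm

lemma measurable_gaussMap : Measurable gaussMap :=
  measurable_fract.comp (measurable_const.div measurable_id)

lemma gaussMap_mem_Ico (x : ℝ) : gaussMap x ∈ Ico 0 1 :=
  ⟨Int.fract_nonneg _, Int.fract_lt_one _⟩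

lemma cfPartialQuotient_succ (x : ℝ) (j : ℕ) :
    cfPartialQuotient x (j + 1) = ⌊1 / gaussMap^[j] x⌋ := rfl

lemma mem_Ioc_of_floor_one_div_eq_one {y : ℝ} (h : ⌊1 / y⌋ = 1) : y ∈ Ioc (1 / 2) 1 := by
  rw [Int.floor_eq_iff] at h
  have hy : 0 < y := by
    by_contra! hy
    have : 1 / y ≤ 0 := div_nonpos_of_nonneg_of_nonpos zero_le_one hy
    push_cast at h
    linarith [h.1]
  push_cast at h
  rw [le_div_iff₀ hy, div_lt_iff₀ hy] at h
  constructor <;> linarith [h.1, h.2]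

lemma inv_one_add_gaussMap_of_floor_one_div_eq_one {y : ℝ} (h : ⌊1 / y⌋ = 1) :
    (1 + gaussMap y)⁻¹ = y := by
  rw [gaussMap_eq_one_div_sub_floor, h, Int.cast_one, add_sub_cancel, one_div, inv_inv]

lemma one_add_inv_goldenRatio : 1 + φ⁻¹ = φ := by
  rw [inv_goldenRatio, ← sub_eq_add_neg, one_sub_goldenRatio]

lemma goldenRatio_inv_mem_Icc : φ⁻¹ ∈ Icc (1 / 2) 1 := by
  refine ⟨?_, inv_le_one_of_one_le₀ one_lt_goldenRatio.le⟩
  rw [one_div]; exact inv_anti₀ goldenRatio_pos goldenRatio_lt_two.le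

lemma abs_inv_one_add_sub_inv_one_add_le {u v : ℝ} (hu : 1 / 2 ≤ u) (hv : 1 / 2 ≤ v) :
    |(1 + u)⁻¹ - (1 + v)⁻¹| ≤ 4 / 9 * |u - v| := by
  have hu' : 0 < 1 + u := by linarith
  have hv' : 0 < 1 + v := by linarith
  rw [inv_sub_inv hu'.ne' hv'.ne', abs_div, abs_of_pos (mul_pos hu' hv'),
    div_le_iff₀ (mul_pos hu' hv'), abs_sub_comm]
  have : 9 / 4 ≤ (1 + u) * (1 + v) := by nlinarith
  have := abs_nonneg (u - v)
  rw [add_sub_add_left_eq_sub]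
  nlinarith

/-- `φ⁻¹ = [0; 1, 1, …]` is the fixed point of `y ↦ (1 + y)⁻¹`, a `4/9`-contraction on
`[1/2, 1]`. -/
lemma abs_sub_goldenRatio_inv_le {m : ℕ} {y : ℝ}
    (h : ∀ t ≤ m, ⌊1 / gaussMap^[t] y⌋ = 1) : |y - φ⁻¹| ≤ (4 / 9) ^ m / 2 := by
  induction m generalizing y with
  | zero =>
    have hy : y ∈ Ioc (1 / 2) 1 := mem_Ioc_of_floor_one_div_eq_one (h 0 le_rfl)
    have hg := goldenRatio_inv_mem_Icc
    rw [abs_le, pow_zero]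
    constructor <;> linarith [hy.1, hy.2, hg.1, hg.2]
  | succ m ih =>
    have h0 : ⌊1 / y⌋ = 1 := h 0 (Nat.zero_le _)
    have hG : |gaussMap y - φ⁻¹| ≤ (4 / 9) ^ m / 2 :=
      ih fun t ht => by rw [← Function.iterate_succ_apply]; exact h (t + 1) (by omega)
    have hGy := mem_Ioc_of_floor_one_div_eq_one (h 1 (by omega))
    calc |y - φ⁻¹| = |(1 + gaussMap y)⁻¹ - (1 + φ⁻¹)⁻¹| := by
          rw [inv_one_add_gaussMap_of_floor_one_div_eq_one h0, one_add_inv_goldenRatio]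
      _ ≤ 4 / 9 * |gaussMap y - φ⁻¹| :=
          abs_inv_one_add_sub_inv_one_add_le hGy.1.le goldenRatio_inv_mem_Icc.1
      _ ≤ (4 / 9) ^ (m + 1) / 2 := by rw [pow_succ]; linarith

/-- The Gauss measure on `(0, 1]`, not normalised: its total mass is `log 2`. -/
noncomputable def gaussMeasure : Measure ℝ :=
  (volume.restrict (Ioc 0 1)).withDensity fun x => ENNReal.ofReal (1 + x)⁻¹

lemma gaussMeasure_le : gaussMeasure ≤ volume.restrict (Ioc 0 1) := by
  conv_rhs => rw [← withDensity_one (μ := volume.restrict (Ioc 0 1))]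
  refine withDensity_mono ((ae_restrict_iff' measurableSet_Ioc).2 (.of_forall fun x hx => ?_))
  exact ENNReal.ofReal_le_one.2 (inv_le_one_of_one_le₀ (by linarith [hx.1]))

instance : NullSingletonClass gaussMeasure := by
  rw [gaussMeasure]; infer_instance

instance : IsFiniteMeasure gaussMeasure :=
  isFiniteMeasure_of_le _ gaussMeasure_le

lemma restrict_Ioc_le_two_smul_gaussMeasure :
    volume.restrict (Ioc 0 1) ≤ (2 : ℝ≥0∞) • gaussMeasure := by
  conv_lhs => rw [← withDensity_one (μ := volume.restrict (Ioc 0 1))]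
  rw [gaussMeasure, ← withDensity_smul _ (by fun_prop)]
  refine withDensity_mono ((ae_restrict_iff' measurableSet_Ioc).2 (.of_forall fun x hx => ?_))
  have : (2 : ℝ)⁻¹ ≤ (1 + x)⁻¹ := inv_anti₀ (by linarith [hx.1]) (by linarith [hx.2])
  calc (1 : ℝ≥0∞) = 2 * ENNReal.ofReal 2⁻¹ := by
        rw [ENNReal.ofReal_inv_of_pos two_pos, ENNReal.ofReal_ofNat,
          ENNReal.mul_inv_cancel two_ne_zero ENNReal.ofNat_ne_top]
    _ ≤ 2 * ENNReal.ofReal (1 + x)⁻¹ := by gcongr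

lemma gaussMeasure_inter_Ioc (s : Set ℝ) : gaussMeasure (s ∩ Ioc 0 1) = gaussMeasure s :=
  measure_inter_conull <| le_antisymm ((gaussMeasure_le _).trans_eq (by simp)) zero_le

lemma gaussMeasure_Ioc {c d : ℝ} (hc : 0 ≤ c) (hcd : c ≤ d) (hd : d ≤ 1) :
    gaussMeasure (Ioc c d) = ENNReal.ofReal (log (1 + d) - log (1 + c)) := by
  have hint : IntervalIntegrable (fun x : ℝ => (1 + x)⁻¹) volume c d :=
    (ContinuousOn.inv₀ (by fun_prop) fun x hx => by
      rw [uIcc_of_le hcd] at hx; linarith [hx.1]).intervalIntegrable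
  rw [gaussMeasure, withDensity_apply _ measurableSet_Ioc,
    Measure.restrict_restrict measurableSet_Ioc, inter_eq_left.2 (Ioc_subset_Ioc hc hd),
    ← ofReal_integral_eq_lintegral_ofReal (hint.1)
      (ae_restrict_of_forall_mem measurableSet_Ioc fun x hx => by
        simp only [Pi.zero_apply]; exact inv_nonneg.2 (by linarith [hx.1])),
    ← intervalIntegral.integral_of_le hcd,
    intervalIntegral.integral_comp_add_left (fun x => x⁻¹),
    integral_inv_of_pos (by linarith) (by linarith), log_div (by linarith) (by linarith)]

lemma gaussMap_preimage_Ico_inter_Ioc {a b : ℝ} (ha : 0 ≤ a) (hab : a ≤ b) (hb : b ≤ 1) :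
    gaussMap ⁻¹' Ico a b ∩ Ioc 0 1 = ⋃ n : ℕ, Ioc ((n + 1 + b : ℝ)⁻¹) ((n + 1 + a : ℝ)⁻¹) := by
  have hb0 : 0 ≤ b := ha.trans hab
  ext x
  simp only [mem_inter_iff, mem_preimage, mem_iUnion, mem_Ico, mem_Ioc,
    gaussMap_eq_one_div_sub_floor, one_div]
  constructor
  · rintro ⟨⟨h1, h2⟩, hx0, hx1⟩
    have : 1 ≤ ⌊x⁻¹⌋ := Int.le_floor.2 (by exact_mod_cast (one_le_inv₀ hx0).2 hx1)
    obtain ⟨n, hn⟩ := Int.eq_ofNat_of_zero_le (by omega : 0 ≤ ⌊x⁻¹⌋ - 1)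
    have hfl : (⌊x⁻¹⌋ : ℝ) = n + 1 := by exact_mod_cast (by omega : ⌊x⁻¹⌋ = n + 1)
    rw [hfl] at h1 h2
    exact ⟨n, (inv_lt_comm₀ (by positivity) hx0).2 (by linarith),
      (le_inv_comm₀ hx0 (by positivity)).2 (by linarith)⟩
  · rintro ⟨n, h1, h2⟩
    have hx0 : 0 < x := lt_trans (by positivity) h1
    have h1' : x⁻¹ < n + 1 + b := (inv_lt_comm₀ hx0 (by positivity)).2 h1
    have h2' : n + 1 + a ≤ x⁻¹ := (le_inv_comm₀ (by positivity) hx0).2 h2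
    have hfl : ⌊x⁻¹⌋ = n + 1 := by
      rw [Int.floor_eq_iff]; push_cast; constructor <;> linarith
    rw [hfl]; push_cast
    refine ⟨⟨by linarith, by linarith⟩, hx0, h2.trans (inv_le_one_of_one_le₀ (by linarith))⟩

lemma pairwise_disjoint_Ioc_inv_add {a b : ℝ} (ha : 0 ≤ a) (hab : a ≤ b) (hb : b ≤ 1) :
    Pairwise (Function.onFun Disjoint fun n : ℕ =>
      Ioc ((n + 1 + b : ℝ)⁻¹) ((n + 1 + a : ℝ)⁻¹)) := by
  have hb0 : 0 ≤ b := ha.trans hab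
  refine pairwise_disjoint_on _ |>.2 fun m n hmn => Set.disjoint_left.2 fun x hm hn => ?_
  have : (m : ℝ) + 1 ≤ n := by exact_mod_cast hmn
  have : ((n : ℝ) + 1 + a)⁻¹ ≤ (m + 1 + b)⁻¹ := inv_anti₀ (by positivity) (by linarith)
  linarith [hm.1, hn.2]

lemma log_one_add_inv {t : ℝ} (ht : 0 < t) : log (1 + t⁻¹) = log (t + 1) - log t := by
  rw [← log_div (by linarith) ht.ne', add_div, div_self ht.ne', one_div]

/-- The branch `x ↦ 1 / (n + 1 + x)` of `G⁻¹` maps `[a, b)` onto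
`(1 / (n + 1 + b), 1 / (n + 1 + a)]`, and the Gauss measures of these intervals telescope. -/
lemma gaussMeasure_preimage_Ico {a b : ℝ} (ha : 0 ≤ a) (hab : a ≤ b) (hb : b ≤ 1) :
    gaussMeasure (gaussMap ⁻¹' Ico a b) = gaussMeasure (Ioc a b) := by
  have hb0 : 0 ≤ b := ha.trans hab
  set w : ℕ → ℝ := fun n => log (n + 1 + b) - log (n + 1 + a)
  have hpos (n : ℕ) (c : ℝ) (hc : 0 ≤ c) : 0 < (n + 1 + c : ℝ) := by positivity
  have hdiff (n : ℕ) :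
      w n - w (n + 1) = log (1 + (n + 1 + a)⁻¹) - log (1 + (n + 1 + b)⁻¹) := by
    rw [log_one_add_inv (hpos n a ha), log_one_add_inv (hpos n b hb0)]
    simp only [w]; push_cast; ring_nf
  have hanti : Antitone w := antitone_nat_of_succ_le fun n => by
    rw [← sub_nonneg, hdiff, sub_nonneg]
    have := hpos n b hb0
    exact log_le_log (by positivity) (by gcongr)
  have hlim : Tendsto w atTop (𝓝 0) := by
    have := (tendsto_log_comp_add_sub_log (b - a)).comp
      (tendsto_atTop_add_const_right _ (1 + a) tendsto_natCast_atTop_atTop)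
    refine this.congr fun n => ?_
    simp only [Function.comp_apply, w]; ring_nf
  rw [← gaussMeasure_inter_Ioc, gaussMap_preimage_Ico_inter_Ioc ha hab hb,
    measure_iUnion (pairwise_disjoint_Ioc_inv_add ha hab hb) fun _ => measurableSet_Ioc,
    gaussMeasure_Ioc ha hab hb]
  calc ∑' n : ℕ, gaussMeasure (Ioc ((n + 1 + b : ℝ)⁻¹) ((n + 1 + a : ℝ)⁻¹))
      = ∑' n, ENNReal.ofReal (w n - w (n + 1)) := by
        refine tsum_congr fun n => ?_
        rw [gaussMeasure_Ioc (inv_pos.2 (hpos n b hb0)).le (inv_anti₀ (hpos n a ha) (by linarith))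
          (inv_le_one_of_one_le₀ (by linarith)), hdiff]
    _ = ENNReal.ofReal (log (1 + b) - log (1 + a)) := by
        rw [tsum_ofReal_sub_succ hanti hlim]; simp [w, add_comm]

theorem measurePreserving_gaussMap : MeasurePreserving gaussMap gaussMeasure gaussMeasure := by
  refine ⟨measurable_gaussMap, (Measure.ext_of_Ico _ _ fun a b _ => ?_).symm⟩
  have hpre : gaussMap ⁻¹' Ico a b = gaussMap ⁻¹' Ico (a ⊔ 0) (b ⊓ 1) := by
    ext x
    have := gaussMap_mem_Ico x
    simp only [mem_preimage, mem_Ico, sup_le_iff, lt_inf_iff] at this ⊢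
    tauto
  have hIoc : gaussMeasure (Ico a b) = gaussMeasure (Ioc (a ⊔ 0) (b ⊓ 1)) := by
    rw [measure_congr Ico_ae_eq_Ioc, ← gaussMeasure_inter_Ioc, Ioc_inter_Ioc]
  rw [Measure.map_apply measurable_gaussMap measurableSet_Ico, hpre, hIoc]
  rcases le_total (a ⊔ 0) (b ⊓ 1) with h | h
  · exact (gaussMeasure_preimage_Ico le_sup_right h inf_le_right).symm
  · simp [Ico_eq_empty_of_le h, Ioc_eq_empty_of_le h]

lemma volume_restrict_preimage_iterate_gaussMap_le (i : ℕ) {s : Set ℝ} (hs : MeasurableSet s) :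
    volume.restrict (Ioc 0 1) (gaussMap^[i] ⁻¹' s) ≤ 2 * volume s :=
  calc volume.restrict (Ioc 0 1) (gaussMap^[i] ⁻¹' s) ≤ 2 * gaussMeasure (gaussMap^[i] ⁻¹' s) :=
        restrict_Ioc_le_two_smul_gaussMeasure _
    _ = 2 * gaussMeasure s := by
        rw [(measurePreserving_gaussMap.iterate i).measure_preimage hs.nullMeasurableSet]
    _ ≤ 2 * volume s := mul_le_mul_right ((gaussMeasure_le s).trans (Measure.restrict_le_self s)) 2

open Classical in
lemma HasDensityOne.iterate_gaussMap_mem_closedBall {x : ℝ}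
    (h : HasDensityOne fun j => cfPartialQuotient x (j + 1) = 1) (m : ℕ) :
    HasDensityOne fun i => gaussMap^[i] x ∈ closedBall φ⁻¹ ((4 / 9) ^ m / 2) :=
  (h.forall_add m).mono fun i hi => abs_sub_goldenRatio_inv_le fun t ht => by
    rw [← Function.iterate_add_apply, add_comm, ← cfPartialQuotient_succ]
    exact hi t ht

/-- The set of irrationals `x ∈ (0,1)` whose continued fraction partial quotients
have density of `1`'s equal to `1` is a Lebesgue null set. -/
theorem volume_density_one_set_eq_zero :
    MeasureTheory.volume
      {x : ℝ | x ∈ Set.Ioo (0 : ℝ) 1 ∧ Irrational x ∧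
        Filter.Tendsto
          (fun k : ℕ =>
            (((Finset.Icc 1 k).filter (fun i => cfPartialQuotient x i = 1)).card : ℝ) / k)
          Filter.atTop (nhds 1)} = 0 := by
  have hlim : Tendsto (fun m : ℕ => 2 * volume (closedBall φ⁻¹ ((4 / 9 : ℝ) ^ m / 2)))
      atTop (𝓝 0) := by
    simp_rw [volume_closedBall, mul_div_cancel₀ _ (two_ne_zero' ℝ)]
    simpa using ENNReal.Tendsto.const_mul (a := 2) (ENNReal.tendsto_ofReal
      (tendsto_pow_atTop_nhds_zero_of_lt_one (by norm_num) (by norm_num : (4 / 9 : ℝ) < 1)))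
      (Or.inr ENNReal.ofNat_ne_top)
  refine le_antisymm (ge_of_tendsto' hlim fun m => ?_) zero_le
  rw [← Measure.restrict_eq_self _ fun x hx => Ioo_subset_Ioc_self hx.1]
  refine measure_le_of_hasDensityOne_mem
    (fun i => measurable_gaussMap.iterate i measurableSet_closedBall)
    (fun i => volume_restrict_preimage_iterate_gaussMap_le i measurableSet_closedBall)
    fun x hx => HasDensityOne.iterate_gaussMap_mem_closedBall ?_ m
  simpa [HasDensityOne, card_filter_Icc_one_eq_count] using hx.2.2
end

section
/- Let f be a function from the irrational real numbers to the irrational real numbers satisfying the functional equations f(1/x) = 1/f(x), f(1 − x) = 1 − f(x), and f(−x) = −1/f(x) for every irrational x. Then for every matrix g = [[a,b],[c,d]] with a,b,c,d ∈ ℤ and ad − bc = ±1 there exists a matrix h = [[a',b'],[c',d']] with a',b',c',d' ∈ ℤ and a'd' − b'c' = ±1 such that f((a·x + b)/(c·x + d)) = (a'·f(x) + b')/(c'·f(x) + d') for every irrational x. -/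
/-!
The matrices `g ∈ GL(2, ℤ)` for which some `h ∈ GL(2, ℤ)` satisfies `f ∘ g = h ∘ f` on the
irrationals form a subgroup, because Möbius transformations preserve irrationality and `f` maps
irrationals to irrationals. The three functional equations say exactly that this subgroup contains
the reflections `x ↦ 1/x`, `x ↦ 1 - x` and `x ↦ -x`, and these generate `GL(2, ℤ)`.
-/

open Matrix MatrixGroups ModularGroup

noncomputable def moebius (g : Matrix (Fin 2) (Fin 2) ℤ) (x : ℝ) : ℝ :=
  (g 0 0 * x + g 0 1) / (g 1 0 * x + g 1 1)

@[simp]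
lemma moebius_one (x : ℝ) : moebius 1 x = x := by
  simp [moebius]

lemma moebius_mul (g h : Matrix (Fin 2) (Fin 2) ℤ) {x : ℝ}
    (hx : (h 1 0 : ℝ) * x + h 1 1 ≠ 0) : moebius (g * h) x = moebius g (moebius h x) := by
  simp only [moebius, mul_apply, Fin.sum_univ_two, mul_div_assoc', div_add' _ _ _ hx,
    div_div_div_cancel_right₀ hx]
  push_cast
  congr 1 <;> ring

lemma moebius_denom_ne_zero {g : Matrix (Fin 2) (Fin 2) ℤ} (hg : g 1 0 ≠ 0 ∨ g 1 1 ≠ 0)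
    {x : ℝ} (hx : Irrational x) : (g 1 0 : ℝ) * x + g 1 1 ≠ 0 := by
  rcases eq_or_ne (g 1 0) 0 with h0 | h0
  · simpa [h0] using hg
  · exact ((hx.intCast_mul h0).add_intCast _).ne_zero

namespace Matrix.GeneralLinearGroup

lemma det_eq_one_or_neg_one {n : Type*} [Fintype n] [DecidableEq n] (g : GL n ℤ) :
    (g : Matrix n n ℤ).det = 1 ∨ (g : Matrix n n ℤ).det = -1 :=
  Int.isUnit_iff.1 ((isUnit_iff_isUnit_det _).1 g.isUnit)

lemma row_one_ne_zero (g : GL (Fin 2) ℤ) : g 1 0 ≠ 0 ∨ g 1 1 ≠ 0 := by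
  by_contra! h
  have := det_eq_one_or_neg_one g
  simp [det_fin_two, h] at this

end Matrix.GeneralLinearGroup

open Matrix.GeneralLinearGroup

lemma moebius_inv_moebius (g : GL (Fin 2) ℤ) {x : ℝ} (hx : Irrational x) :
    moebius ↑g⁻¹ (moebius g x) = x := by
  rw [← moebius_mul _ _ (moebius_denom_ne_zero g.row_one_ne_zero hx), ← Units.val_mul,
    inv_mul_cancel, Units.val_one, moebius_one]

lemma moebius_moebius_inv (g : GL (Fin 2) ℤ) {x : ℝ} (hx : Irrational x) :
    moebius g (moebius ↑g⁻¹ x) = x := by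
  simpa using moebius_inv_moebius g⁻¹ hx

lemma irrational_moebius (g : GL (Fin 2) ℤ) {x : ℝ} (hx : Irrational x) :
    Irrational (moebius g x) := by
  rintro ⟨q, hq⟩
  refine hx ⟨(g⁻¹ 0 0 * q + g⁻¹ 0 1) / (g⁻¹ 1 0 * q + g⁻¹ 1 1), ?_⟩
  rw [← moebius_inv_moebius g hx, ← hq, moebius]
  push_cast
  rfl

def equivariantSubgroup (f : ℝ → ℝ) (hf : ∀ x, Irrational x → Irrational (f x)) :
    Subgroup (GL (Fin 2) ℤ) where
  carrier := {g | ∃ h : GL (Fin 2) ℤ, ∀ x, Irrational x → f (moebius g x) = moebius h (f x)}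
  one_mem' := ⟨1, fun x _ => by simp⟩
  mul_mem' := by
    rintro g₁ g₂ ⟨h₁, hfg₁⟩ ⟨h₂, hfg₂⟩
    refine ⟨h₁ * h₂, fun x hx => ?_⟩
    rw [Units.val_mul, moebius_mul _ _ (moebius_denom_ne_zero g₂.row_one_ne_zero hx),
      hfg₁ _ (irrational_moebius g₂ hx), hfg₂ x hx, Units.val_mul,
      moebius_mul _ _ (moebius_denom_ne_zero h₂.row_one_ne_zero (hf x hx))]
  inv_mem' := by
    rintro g ⟨h, hfg⟩
    refine ⟨h⁻¹, fun y hy => ?_⟩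
    have hgy := irrational_moebius g⁻¹ hy
    calc f (moebius ↑g⁻¹ y) = moebius ↑h⁻¹ (moebius h (f (moebius ↑g⁻¹ y))) :=
          (moebius_inv_moebius h (hf _ hgy)).symm
      _ = moebius ↑h⁻¹ (f y) := by rw [← hfg _ hgy, moebius_moebius_inv g hy]

def glRecip : GL (Fin 2) ℤ :=
  ⟨!![0, 1; 1, 0], !![0, 1; 1, 0], by simp [one_fin_two], by simp [one_fin_two]⟩

def glOneSub : GL (Fin 2) ℤ :=
  ⟨!![-1, 1; 0, 1], !![-1, 1; 0, 1], by simp [one_fin_two], by simp [one_fin_two]⟩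

def glNeg : GL (Fin 2) ℤ :=
  ⟨!![-1, 0; 0, 1], !![-1, 0; 0, 1], by simp [one_fin_two], by simp [one_fin_two]⟩

lemma moebius_glRecip (x : ℝ) : moebius glRecip x = 1 / x := by
  simp [moebius, glRecip]

lemma moebius_glOneSub (x : ℝ) : moebius glOneSub x = 1 - x := by
  simp [moebius, glOneSub]
  ring

lemma moebius_glNeg (x : ℝ) : moebius glNeg x = -x := by
  simp [moebius, glNeg]

lemma moebius_toGL_S (x : ℝ) : moebius (SpecialLinearGroup.toGL S) x = -1 / x := by
  simp [moebius, coe_S]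

lemma toGL_S_eq : SpecialLinearGroup.toGL S = glNeg * glRecip := by
  ext i j; fin_cases i <;> fin_cases j <;> simp [glNeg, glRecip, coe_S]

lemma toGL_T_eq : SpecialLinearGroup.toGL T = glOneSub * glNeg := by
  ext i j; fin_cases i <;> fin_cases j <;> simp [glNeg, glOneSub, coe_T]

lemma glNeg_mul_self : glNeg * glNeg = 1 := by
  ext i j; fin_cases i <;> fin_cases j <;> simp [glNeg]

/-- The reflections generate `GL(2, ℤ)`: `S = glNeg * glRecip` and `T = glOneSub * glNeg` generate
`SL(2, ℤ)`, which has index two. -/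
lemma closure_glRecip_glOneSub_glNeg : Subgroup.closure {glRecip, glOneSub, glNeg} = ⊤ := by
  set H := Subgroup.closure {glRecip, glOneSub, glNeg}
  have hSL : (SpecialLinearGroup.toGL : SL(2, ℤ) →* GL (Fin 2) ℤ).range ≤ H := by
    rw [MonoidHom.range_eq_map, ← SpecialLinearGroup.SL2Z_generators, MonoidHom.map_closure,
      Subgroup.closure_le]
    rintro _ ⟨g, rfl | rfl, rfl⟩
    · rw [toGL_S_eq]
      exact H.mul_mem (Subgroup.subset_closure (by simp)) (Subgroup.subset_closure (by simp))
    · rw [toGL_T_eq]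
      exact H.mul_mem (Subgroup.subset_closure (by simp)) (Subgroup.subset_closure (by simp))
  rw [Subgroup.eq_top_iff']
  intro g
  rcases det_eq_one_or_neg_one g with hg | hg
  · exact hSL ⟨⟨g, hg⟩, Units.ext rfl⟩
  · have hneg : glNeg ∈ H := Subgroup.subset_closure (by simp)
    have hdet : ((glNeg * g : GL (Fin 2) ℤ) : Matrix (Fin 2) (Fin 2) ℤ).det = 1 := by
      rw [Units.val_mul, det_mul, hg]
      simp [glNeg]
    rw [← one_mul g, ← glNeg_mul_self, mul_assoc]
    exact H.mul_mem hneg (hSL ⟨⟨_, hdet⟩, Units.ext rfl⟩)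

/-- A function on the irrationals, with irrational values, satisfying the three
functional equations `f(1/x) = 1/f(x)`, `f(1-x) = 1-f(x)` and `f(-x) = -1/f(x)`
is equivariant with the `PGL(2,ℤ)`-action: for every integer matrix `[[a,b],[c,d]]`
with `ad - bc = ±1` there is an integer matrix `[[a',b'],[c',d']]` with
`a'd' - b'c' = ±1` such that `f((ax+b)/(cx+d)) = (a'·f(x)+b')/(c'·f(x)+d')`
for every irrational `x`. -/
theorem jimm_equivariant (f : ℝ → ℝ)
    (hIrr : ∀ x : ℝ, Irrational x → Irrational (f x))
    (hinv : ∀ x : ℝ, Irrational x → f (1 / x) = 1 / f x)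
    (hrefl : ∀ x : ℝ, Irrational x → f (1 - x) = 1 - f x)
    (hneg : ∀ x : ℝ, Irrational x → f (-x) = -1 / f x)
    (a b c d : ℤ) (hdet : a * d - b * c = 1 ∨ a * d - b * c = -1) :
    ∃ a' b' c' d' : ℤ, (a' * d' - b' * c' = 1 ∨ a' * d' - b' * c' = -1) ∧
      ∀ x : ℝ, Irrational x →
        f (((a : ℝ) * x + b) / ((c : ℝ) * x + d))
          = ((a' : ℝ) * f x + b') / ((c' : ℝ) * f x + d') := by
  have hall : equivariantSubgroup f hIrr = ⊤ := by
    rw [eq_top_iff, ← closure_glRecip_glOneSub_glNeg, Subgroup.closure_le]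
    rintro g (rfl | rfl | rfl)
    · exact ⟨glRecip, fun x hx => by rw [moebius_glRecip, moebius_glRecip, hinv x hx]⟩
    · exact ⟨glOneSub, fun x hx => by rw [moebius_glOneSub, moebius_glOneSub, hrefl x hx]⟩
    · exact ⟨SpecialLinearGroup.toGL S, fun x hx => by
        rw [moebius_glNeg, moebius_toGL_S, hneg x hx]⟩
  have hunit : IsUnit !![a, b; c, d] := by
    rw [isUnit_iff_isUnit_det, det_fin_two_of, Int.isUnit_iff]
    exact hdet
  obtain ⟨h, hh⟩ : hunit.unit ∈ equivariantSubgroup f hIrr := hall ▸ Subgroup.mem_top _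
  refine ⟨h 0 0, h 0 1, h 1 0, h 1 1, by simpa [det_fin_two] using det_eq_one_or_neg_one h,
    fun x hx => ?_⟩
  simpa [moebius] using hh x hx
end

section
/- Let (n_i)_{i≥1} be a sequence of integers with n_i ≥ 2 for all i, and let W be its J-word. Then (n_i) is eventually periodic if and only if W is eventually periodic. -/
/-- A sequence `s` (indexed from 1) is eventually periodic if there are `N ≥ 1` and
`p ≥ 1` with `s (i + p) = s i` for all `i ≥ N`. -/
def EventuallyPeriodic {α : Type*} (s : ℕ → α) : Prop :=
  ∃ N p : ℕ, 1 ≤ N ∧ 1 ≤ p ∧ ∀ i : ℕ, N ≤ i → s (i + p) = s i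

/-!
The `2`s of the J-word sit at the positions `jPos n k = n₁ + ⋯ + nₖ - (k - 1)`, whose consecutive
gaps are `n (k + 1) - 1`. So it suffices to show, for any strictly increasing `a : ℕ → ℤ`, that the
gaps of `a` are eventually periodic iff membership in the range of `a` is. Both conditions say that
eventually `a (k + q) = a k + p` for fixed `p, q > 0`: if the range is eventually invariant under
translation by `p`, this translation sends each late `a k` to some `a (σ k)`, and since it maps
consecutive terms to consecutive terms, `σ k - k` is eventually a constant `q`.
-/

open Filter Function Set

section EventuallyPeriodic

variable {α β : Type*} {s t : ℕ → α}

theorem eventuallyPeriodic_iff_exists_pos :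
    EventuallyPeriodic s ↔ ∃ N p, 0 < p ∧ ∀ i, N ≤ i → s (i + p) = s i := by
  constructor
  · rintro ⟨N, p, -, hp, h⟩
    exact ⟨N, p, hp, h⟩
  · rintro ⟨N, p, hp, h⟩
    exact ⟨N + 1, p, by omega, hp, fun i hi => h i (by omega)⟩

theorem EventuallyPeriodic.comp (h : EventuallyPeriodic s) (f : α → β) :
    EventuallyPeriodic (f ∘ s) := by
  obtain ⟨N, p, hN, hp, hs⟩ := h
  exact ⟨N, p, hN, hp, fun i hi => congrArg f (hs i hi)⟩

theorem Function.Injective.eventuallyPeriodic_comp_iff {f : α → β} (hf : Injective f) :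
    EventuallyPeriodic (f ∘ s) ↔ EventuallyPeriodic s :=
  ⟨fun ⟨N, p, hN, hp, hs⟩ => ⟨N, p, hN, hp, fun i hi => hf (hs i hi)⟩, fun h => h.comp f⟩

theorem EventuallyPeriodic.congr (h : EventuallyPeriodic s) (hst : s =ᶠ[atTop] t) :
    EventuallyPeriodic t := by
  obtain ⟨N, p, -, hp, hs⟩ := h
  obtain ⟨M, hM⟩ := eventually_atTop.1 hst
  refine eventuallyPeriodic_iff_exists_pos.2 ⟨max N M, p, hp, fun i hi => ?_⟩
  rw [← hM i (by omega), ← hM (i + p) (by omega), hs i (by omega)]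

theorem eventuallyPeriodic_congr (hst : s =ᶠ[atTop] t) :
    EventuallyPeriodic s ↔ EventuallyPeriodic t :=
  ⟨fun h => h.congr hst, fun h => h.congr hst.symm⟩

theorem eventuallyPeriodic_comp_add_right_iff (m : ℕ) :
    EventuallyPeriodic (fun i => s (i + m)) ↔ EventuallyPeriodic s := by
  simp only [eventuallyPeriodic_iff_exists_pos]
  constructor
  · rintro ⟨N, p, hp, h⟩
    refine ⟨N + m, p, hp, fun i hi => ?_⟩
    obtain ⟨i, rfl⟩ : ∃ i', i = i' + m := ⟨i - m, by omega⟩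
    rw [add_right_comm, h i (by omega)]
  · rintro ⟨N, p, hp, h⟩
    exact ⟨N, p, hp, fun i hi => by rw [add_right_comm, h (i + m) (by omega)]⟩

end EventuallyPeriodic

theorem eventuallyPeriodic_sub_iff {G : Type*} [AddCommGroup G] {a : ℕ → G} :
    EventuallyPeriodic (fun k => a (k + 1) - a k) ↔
      ∃ N q c, 0 < q ∧ ∀ k, N ≤ k → a (k + q) = a k + c := by
  rw [eventuallyPeriodic_iff_exists_pos]
  constructor
  · rintro ⟨N, q, hq, h⟩
    refine ⟨N, q, a (N + q) - a N, hq, fun k hk => ?_⟩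
    induction k, hk using Nat.le_induction with
    | base => abel
    | succ k hk ih =>
      have hk := h k hk
      rw [add_right_comm, sub_eq_iff_eq_add, ih] at hk
      rw [hk]
      abel
  · rintro ⟨N, q, c, hq, h⟩
    refine ⟨N, q, hq, fun k hk => ?_⟩
    rw [add_right_comm, h (k + 1) (by omega), h k hk]
    abel

namespace StrictMono

variable {a : ℕ → ℤ}

theorem apply_zero_add_le (ha : StrictMono a) (k : ℕ) : a 0 + k ≤ a k := by
  induction k with
  | zero => simp
  | succ k ih => push_cast; linarith [ha (Nat.lt_succ_self k)]

theorem eventuallyPeriodic_mem_range_of_add_eq (ha : StrictMono a) {N q : ℕ} {c : ℤ}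
    (hq : 0 < q) (h : ∀ k, N ≤ k → a (k + q) = a k + c) :
    EventuallyPeriodic (fun j : ℕ => (j : ℤ) ∈ range a) := by
  have hc : 0 < c := by linarith [h N le_rfl, ha (Nat.lt_add_of_pos_right hq : N < N + q)]
  lift c to ℕ using hc.le
  refine eventuallyPeriodic_iff_exists_pos.2 ⟨(a N).toNat, c, by omega, fun j hj => ?_⟩
  have hj : a N ≤ j := by omega
  refine propext ⟨?_, ?_⟩
  · rintro ⟨k, hk⟩
    have hNk : N + q ≤ k := ha.le_iff_le.1 (by rw [h N le_rfl, hk]; push_cast; omega)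
    obtain ⟨k, rfl⟩ : ∃ k', k = k' + q := ⟨k - q, by omega⟩
    rw [h k (by omega)] at hk
    exact ⟨k, by push_cast at hk; omega⟩
  · rintro ⟨k, hk⟩
    have hNk : N ≤ k := ha.le_iff_le.1 (hk ▸ hj)
    exact ⟨k + q, by rw [h k hNk, hk]; push_cast; ring⟩

theorem exists_add_eq_add_of_eventuallyPeriodic_mem_range (ha : StrictMono a)
    (h : EventuallyPeriodic (fun j : ℕ => (j : ℤ) ∈ range a)) :
    ∃ N q c, 0 < q ∧ ∀ k, N ≤ k → a (k + q) = a k + c := by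
  obtain ⟨N, p, hp, hper⟩ := eventuallyPeriodic_iff_exists_pos.1 h
  have hmem : ∀ x : ℤ, N ≤ x → (x + p ∈ range a ↔ x ∈ range a) := by
    intro x hx
    lift x to ℕ using by omega
    exact_mod_cast iff_of_eq (hper x (by omega))
  obtain ⟨K, hK⟩ : ∃ K, (N : ℤ) ≤ a K :=
    ⟨(N - a 0).toNat, by linarith [ha.apply_zero_add_le (N - a 0).toNat, Int.self_le_toNat (N - a 0)]⟩
  have hshift : ∀ k, K ≤ k → a k + p ∈ range a := fun k hk =>
    (hmem _ (hK.trans (ha.monotone hk))).2 ⟨k, rfl⟩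
  obtain ⟨k₁, hk₁⟩ := hshift K le_rfl
  have hKk₁ : K < k₁ := ha.lt_iff_lt.1 (by omega)
  refine ⟨K, k₁ - K, p, by omega, fun k hk => ?_⟩
  induction k, hk using Nat.le_induction with
  | base => rw [Nat.add_sub_cancel' hKk₁.le, hk₁]
  | succ k hk ih =>
    set q := k₁ - K
    obtain ⟨m, hm⟩ := hshift (k + 1) (by omega)
    have hlt : k + q < m := ha.lt_iff_lt.1 (by rw [ih, hm]; linarith [ha (lt_add_one k)])
    have hle : m ≤ k + 1 + q := by
      -- otherwise `a (k + 1 + q) - p` would be a value of `a` strictly between `a k` and `a (k + 1)`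
      by_contra! hgt
      have hx : N ≤ a (k + 1 + q) - p := by
        linarith [ha (show k + q < k + 1 + q by omega), ha.monotone hk]
      obtain ⟨i, hi⟩ := (hmem _ hx).1 ⟨k + 1 + q, by ring⟩
      have h1 : k < i := ha.lt_iff_lt.1 (by linarith [ha (show k + q < k + 1 + q by omega)])
      have h2 : i < k + 1 := ha.lt_iff_lt.1 (by linarith [ha hgt])
      omega
    rw [← hm, show k + 1 + q = m by omega]

theorem eventuallyPeriodic_sub_iff_mem_range (ha : StrictMono a) :
    EventuallyPeriodic (fun k => a (k + 1) - a k) ↔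
      EventuallyPeriodic (fun j : ℕ => (j : ℤ) ∈ range a) := by
  rw [eventuallyPeriodic_sub_iff]
  constructor
  · rintro ⟨N, q, c, hq, h⟩
    exact ha.eventuallyPeriodic_mem_range_of_add_eq hq h
  · exact ha.exists_add_eq_add_of_eventuallyPeriodic_mem_range

end StrictMono

/-- For `k ≥ 1`, `jPos n k` is the position of the `2` closing the block `B_k` of the J-word. -/
def jPos (n : ℕ → ℤ) (k : ℕ) : ℤ := (∑ i ∈ Finset.Icc 1 k, n i) - ((k : ℤ) - 1)

theorem jPos_zero (n : ℕ → ℤ) : jPos n 0 = 1 := by simp [jPos]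

theorem jPos_succ (n : ℕ → ℤ) (k : ℕ) : jPos n (k + 1) = jPos n k + n (k + 1) - 1 := by
  simp only [jPos, Finset.sum_Icc_succ_top (Nat.le_add_left 1 k)]
  push_cast
  ring

theorem strictMono_jPos {n : ℕ → ℤ} (hn : ∀ i, 1 ≤ i → 2 ≤ n i) : StrictMono (jPos n) :=
  strictMono_nat_of_lt_succ fun k => by linarith [jPos_succ n k, hn (k + 1) (by omega)]

open Classical in
theorem IsJWord.eventuallyEq {n : ℕ → ℤ} {W : ℕ → ℕ} (hW : IsJWord n W) :
    W =ᶠ[atTop] (fun p : Prop => if p then 2 else 1) ∘ fun j : ℕ => (j : ℤ) ∈ range (jPos n) := by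
  filter_upwards [eventually_ge_atTop 2] with j hj
  have hpos : (∃ k, 1 ≤ k ∧ (j : ℤ) = jPos n k) ↔ (j : ℤ) ∈ range (jPos n) := by
    constructor
    · rintro ⟨k, -, hk⟩
      exact ⟨k, hk.symm⟩
    · rintro ⟨k, hk⟩
      refine ⟨k, Nat.one_le_iff_ne_zero.2 ?_, hk.symm⟩
      rintro rfl
      rw [jPos_zero] at hk
      omega
  obtain ⟨h2, h1⟩ := hW j (by omega)
  rw [comp_apply]
  split_ifs with h
  · exact h2 (hpos.2 h)
  · exact h1 (mt hpos.1 h)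

/-- A sequence of integers `≥ 2` is eventually periodic if and only if its J-word is
eventually periodic. -/
theorem jword_eventuallyPeriodic_iff (n : ℕ → ℤ) (hn : ∀ i : ℕ, 1 ≤ i → 2 ≤ n i)
    (W : ℕ → ℕ) (hW : IsJWord n W) :
    EventuallyPeriodic n ↔ EventuallyPeriodic W := by
  classical
  have hgaps : (fun k => jPos n (k + 1) - jPos n k) = (· - 1) ∘ fun k => n (k + 1) := by
    ext k
    rw [jPos_succ, comp_apply]
    ring
  have hsymbol : Injective fun p : Prop => if p then (2 : ℕ) else 1 := fun p q h => by
    by_cases hp : p <;> by_cases hq : q <;> simp_all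
  calc EventuallyPeriodic n
      ↔ EventuallyPeriodic fun k => n (k + 1) := (eventuallyPeriodic_comp_add_right_iff 1).symm
    _ ↔ EventuallyPeriodic fun k => jPos n (k + 1) - jPos n k := by
      rw [hgaps, sub_left_injective.eventuallyPeriodic_comp_iff]
    _ ↔ EventuallyPeriodic fun j : ℕ => (j : ℤ) ∈ range (jPos n) :=
      (strictMono_jPos hn).eventuallyPeriodic_sub_iff_mem_range
    _ ↔ EventuallyPeriodic W := by
      rw [← hsymbol.eventuallyPeriodic_comp_iff]
      exact eventuallyPeriodic_congr hW.eventuallyEq.symm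
end
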